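/- arXiv:2502.14812 — 7 statements merged into one kernel-verified Lean document; each statement's English description precedes it below -/
import Mathlib

section
/- For n boxes with values v_1 ≥ ⋯ ≥ v_n > 0, t byzantine boxes, and ℓ boxes to select (t, ℓ < n), the maximum over size-ℓ subsets S of the minimum over size-t subsets B of Σ_{i ∈ S \ B} v_i equals Σ_{i=t+1}^{ℓ} v_i if t < ℓ and equals 0 if t ≥ ℓ, and this maximum is attained by S* = {1, …, ℓ}. -/
open Finset

/-- The worst-case payoff of a selected set `S` against an adversary nullifying
a size-`t` set `B` of boxes. -/
noncomputable def detVal (n t : ℕ) (v : Fin n → ℝ) (S : Finset (Fin n)) : ℝ :=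
  sInf {x : ℝ | ∃ B : Finset (Fin n), B.card = t ∧ x = ∑ i ∈ S \ B, v i}

lemma castLE_image (n k : ℕ) (hk : k ≤ n) :
    Finset.image (Fin.castLE hk) univ = univ.filter (fun i : Fin n => (i : ℕ) < k) := by
  ext i
  simp only [mem_image, mem_univ, true_and, mem_filter]
  constructor
  · rintro ⟨j, rfl⟩; exact j.isLt
  · intro h; exact ⟨⟨i, h⟩, rfl⟩

lemma card_filter_lt (n k : ℕ) (hk : k ≤ n) :
    (univ.filter (fun i : Fin n => (i : ℕ) < k)).card = k := by
  rw [← castLE_image n k hk, Finset.card_image_of_injective _ (Fin.castLE_injective hk)]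
  simp

lemma sum_orderEmb {n k : ℕ} (v : Fin n → ℝ) (A : Finset (Fin n)) (hA : A.card = k) :
    ∑ i ∈ A, v i = ∑ j : Fin k, v (A.orderEmbOfFin hA j) := by
  have himg : Finset.image (A.orderEmbOfFin hA) univ = A := by
    apply Finset.coe_injective
    rw [Finset.coe_image, Finset.coe_univ, Set.image_univ, Finset.range_orderEmbOfFin]
  conv_lhs => rw [← himg]
  rw [Finset.sum_image (fun a _ b _ h => (A.orderEmbOfFin hA).injective h)]

lemma strictMono_le_val {n k : ℕ} (f : Fin k → Fin n) (hf : StrictMono f) (j : Fin k) :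
    (j : ℕ) ≤ (f j : ℕ) := by
  suffices h : ∀ m : ℕ, ∀ j : Fin k, (j : ℕ) = m → m ≤ (f j : ℕ) from h _ j rfl
  intro m
  induction m with
  | zero => intro j _; exact Nat.zero_le _
  | succ m ih =>
    intro j hj
    have hm : m < k := by omega
    have h1 := ih ⟨m, hm⟩ rfl
    have h2 : f ⟨m, hm⟩ < f j := hf (by simp [Fin.lt_def, hj])
    have h3 := Fin.lt_def.mp h2
    omega

/-- Sum over any `k`-set is at most the sum of the `k` largest values. -/
lemma sum_le_top {n k : ℕ} (v : Fin n → ℝ)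
    (hmono : ∀ i j : Fin n, i ≤ j → v j ≤ v i)
    (A : Finset (Fin n)) (hA : A.card = k) :
    ∑ i ∈ A, v i ≤ ∑ i ∈ univ.filter (fun i : Fin n => (i : ℕ) < k), v i := by
  have hk : k ≤ n := by
    have := Finset.card_le_univ A
    simpa [hA] using this
  rw [sum_orderEmb v A hA, ← castLE_image n k hk,
    Finset.sum_image (fun a _ b _ h => Fin.castLE_injective hk h)]
  apply Finset.sum_le_sum
  intro j _
  apply hmono
  exact strictMono_le_val _ (A.orderEmbOfFin hA).strictMono j

/-- For `n` boxes with non-increasing positive values, `t` byzantine boxes and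
`ℓ` boxes to select (`t, ℓ < n`), the deterministic optimum
`max_{|S|=ℓ} min_{|B|=t} ∑_{i ∈ S \ B} v i` equals `∑_{i=t+1}^{ℓ} v i` when
`t < ℓ` and `0` otherwise, attained at `S* = {1, …, ℓ}`. -/
theorem stmt_2 (n t ℓ : ℕ) (v : Fin n → ℝ)
    (hmono : ∀ i j : Fin n, i ≤ j → v j ≤ v i) (hpos : ∀ i, 0 < v i)
    (ht : t < n) (hℓ : ℓ < n) :
    let Sstar : Finset (Fin n) := univ.filter (fun i => (i : ℕ) < ℓ)
    Sstar.card = ℓ ∧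
    (∀ S : Finset (Fin n), S.card = ℓ → detVal n t v S ≤ detVal n t v Sstar) ∧
    detVal n t v Sstar =
      (if t < ℓ then ∑ i ∈ univ.filter (fun i : Fin n => t ≤ (i : ℕ) ∧ (i : ℕ) < ℓ), v i
       else 0) := by
  intro Sstar
  have hcard : Sstar.card = ℓ := card_filter_lt n ℓ hℓ.le
  -- basic facts about the sInf
  have hPfin : ∀ S : Finset (Fin n),
      ({x : ℝ | ∃ B : Finset (Fin n), B.card = t ∧ x = ∑ i ∈ S \ B, v i}).Finite := by
    intro S
    apply Set.Finite.subset (Set.finite_range (fun B : Finset (Fin n) => ∑ i ∈ S \ B, v i))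
    rintro x ⟨B, -, rfl⟩
    exact ⟨B, rfl⟩
  have hPne : ∀ S : Finset (Fin n),
      ({x : ℝ | ∃ B : Finset (Fin n), B.card = t ∧ x = ∑ i ∈ S \ B, v i}).Nonempty := by
    intro S
    obtain ⟨B, -, hB⟩ := Finset.exists_subset_card_eq
      (s := (univ : Finset (Fin n))) (n := t) (by simpa using ht.le)
    exact ⟨_, B, hB, rfl⟩
  have hle : ∀ (S B : Finset (Fin n)), B.card = t →
      detVal n t v S ≤ ∑ i ∈ S \ B, v i := by
    intro S B hB
    exact csInf_le (hPfin S).bddBelow ⟨B, hB, rfl⟩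
  have hge : ∀ (S : Finset (Fin n)) (c : ℝ),
      (∀ B : Finset (Fin n), B.card = t → c ≤ ∑ i ∈ S \ B, v i) →
      c ≤ detVal n t v S := by
    intro S c h
    apply le_csInf (hPne S)
    rintro x ⟨B, hB, rfl⟩
    exact h B hB
  -- the value of Sstar
  have hval : detVal n t v Sstar =
      (if t < ℓ then ∑ i ∈ univ.filter (fun i : Fin n => t ≤ (i : ℕ) ∧ (i : ℕ) < ℓ), v i
       else 0) := by
    by_cases hc : t < ℓ
    · rw [if_pos hc]
      set T := univ.filter (fun i : Fin n => t ≤ (i : ℕ) ∧ (i : ℕ) < ℓ) with hT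
      set B1 := univ.filter (fun i : Fin n => (i : ℕ) < t) with hB1
      have hB1card : B1.card = t := card_filter_lt n t ht.le
      have hsd : Sstar \ B1 = T := by
        ext i
        simp only [Sstar, B1, T, mem_sdiff, mem_filter, mem_univ, true_and]
        omega
      apply le_antisymm
      · have := hle Sstar B1 hB1card
        rwa [hsd] at this
      · apply hge
        intro B hB
        have hsub : B1 ⊆ Sstar := by
          intro i hi
          simp only [B1, Sstar, mem_filter, mem_univ, true_and] at hi ⊢
          omega
        have h3 : ∑ i ∈ Sstar \ B1, v i + ∑ i ∈ B1, v i = ∑ i ∈ Sstar, v i :=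
          Finset.sum_sdiff hsub
        have h1 : ∑ i ∈ Sstar \ (Sstar ∩ B), v i + ∑ i ∈ Sstar ∩ B, v i
            = ∑ i ∈ Sstar, v i := Finset.sum_sdiff (Finset.inter_subset_left)
        rw [Finset.sdiff_inter_self_left] at h1
        -- ∑ over Sstar ∩ B ≤ ∑ over B1
        set k := (Sstar ∩ B).card with hk
        have hkt : k ≤ t := by
          rw [hk, ← hB]
          exact Finset.card_le_card Finset.inter_subset_right
        have h2 : ∑ i ∈ Sstar ∩ B, v i ≤ ∑ i ∈ B1, v i := by
          calc ∑ i ∈ Sstar ∩ B, v i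
              ≤ ∑ i ∈ univ.filter (fun i : Fin n => (i : ℕ) < k), v i :=
                sum_le_top v hmono _ rfl
            _ ≤ ∑ i ∈ B1, v i := by
                apply Finset.sum_le_sum_of_subset_of_nonneg
                · intro i hi
                  simp only [mem_filter, mem_univ, true_and, B1] at hi ⊢
                  omega
                · intro i _ _; exact (hpos i).le
        rw [hsd] at h3
        linarith
    · rw [if_neg hc]
      push_neg at hc
      apply le_antisymm
      · obtain ⟨B, hsub, hB⟩ := Finset.exists_superset_card_eq
          (s := Sstar) (n := t) (by omega) (by simpa using ht.le)
        have := hle Sstar B hB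
        rwa [Finset.sdiff_eq_empty_iff_subset.mpr hsub, Finset.sum_empty] at this
      · apply hge
        intro B _
        exact Finset.sum_nonneg (fun i _ => (hpos i).le)
  refine ⟨hcard, ?_, hval⟩
  -- optimality of Sstar
  intro S hS
  rw [hval]
  by_cases hc : t < ℓ
  · rw [if_pos hc]
    set e := S.orderEmbOfFin hS with he
    have himg : Finset.image e univ = S := by
      apply Finset.coe_injective
      rw [Finset.coe_image, Finset.coe_univ, Set.image_univ, he, Finset.range_orderEmbOfFin]
    set B0 := Finset.image e (univ.filter (fun j : Fin ℓ => (j : ℕ) < t)) with hB0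
    have hB0card : B0.card = t := by
      rw [hB0, Finset.card_image_of_injective _ e.injective, card_filter_lt ℓ t hc.le]
    have hsd : S \ B0 = Finset.image e (univ.filter (fun j : Fin ℓ => ¬ (j : ℕ) < t)) := by
      rw [Finset.filter_not, Finset.image_sdiff _ _ e.injective, himg, hB0]
    calc detVal n t v S ≤ ∑ i ∈ S \ B0, v i := hle S B0 hB0card
      _ = ∑ j ∈ univ.filter (fun j : Fin ℓ => ¬ (j : ℕ) < t), v (e j) := by
          rw [hsd, Finset.sum_image (fun a _ b _ h => e.injective h)]
      _ ≤ ∑ j ∈ univ.filter (fun j : Fin ℓ => ¬ (j : ℕ) < t), v (Fin.castLE hℓ.le j) := by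
          apply Finset.sum_le_sum
          intro j _
          exact hmono _ _ (strictMono_le_val e e.strictMono j)
      _ = ∑ i ∈ univ.filter (fun i : Fin n => t ≤ (i : ℕ) ∧ (i : ℕ) < ℓ), v i := by
          rw [← Finset.sum_image
            (fun a _ b _ h => Fin.castLE_injective hℓ.le h)]
          congr 1
          ext i
          simp only [mem_image, mem_filter, mem_univ, true_and, not_lt]
          constructor
          · rintro ⟨j, hj, rfl⟩
            exact ⟨hj, j.isLt⟩
          · rintro ⟨h1, h2⟩
            exact ⟨⟨(i : ℕ), h2⟩, h1, rfl⟩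
  · rw [if_neg hc]
    push_neg at hc
    obtain ⟨B, hsub, hB⟩ := Finset.exists_superset_card_eq
      (s := S) (n := t) (by omega) (by simpa using ht.le)
    have := hle S B hB
    rwa [Finset.sdiff_eq_empty_iff_subset.mpr hsub, Finset.sum_empty] at this
end

section
/- For ℓ = 1: there exists a distribution p ∈ Δ([n]) maximizing val(p) := min_{B ∈ [n]^(t)} Σ_{i ∉ B} v_i p_i that additionally satisfies v_1 p_1 ≥ v_2 p_2 ≥ ⋯ ≥ v_n p_n. -/
open Finset

noncomputable def val (n t : ℕ) (v p : Fin n → ℝ) : ℝ :=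
  sInf {x : ℝ | ∃ B : Finset (Fin n), B.card = t ∧ x = ∑ i ∈ univ \ B, v i * p i}

/-!
The optimal value is `V = max_k (k + 1 - t) / ∑_{i ≤ k} 1 / v i`, attained by the distribution
with `v i * p i` constant on the boxes `i ≤ k` and zero elsewhere; this `p` is visibly ordered.
For the upper bound, sort `x i = v i * q i` decreasingly into `y` and discard the `t` largest
entries. By Abel summation a decreasing nonnegative `y` is a nonnegative combination of
indicators of prefixes `Iic j`, and for those `∑_{i ≥ t} y i ≤ V * ∑ y i / v i` is just the
maximality of `V`. Finally, since `1 / v` is increasing, the rearrangement inequality gives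
`∑ y i / v i ≤ ∑ x i / v i = ∑ q i = 1`.
-/

section OrderedRing

variable {R : Type*} [CommRing R] [LinearOrder R] [IsStrictOrderedRing R]

theorem sum_mul_nonpos_of_antitone_of_sum_Iic_nonpos :
    ∀ {n : ℕ} {y w : Fin n → R}, Antitone y → (∀ i, 0 ≤ y i) →
      (∀ j, ∑ i ∈ Iic j, w i ≤ 0) → ∑ i, y i * w i ≤ 0
  | 0, _, _, _, _, _ => by simp
  | n + 1, y, w, hy, hy0, hw => by
    -- subtracting `c` leaves an antitone sequence vanishing at the last index
    obtain ⟨c, hc⟩ : ∃ c, c = y (Fin.last n) := ⟨_, rfl⟩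
    have hsplit : ∑ i, y i * w i
        = ∑ i : Fin n, (y i.castSucc - c) * w i.castSucc + c * ∑ i, w i := by
      have h := Fin.sum_univ_castSucc fun i => (y i - c) * w i
      rw [← hc, sub_self, zero_mul, add_zero] at h
      rw [← h, mul_sum, ← sum_add_distrib]
      exact sum_congr rfl fun i _ => by ring
    have hlayers : ∑ i : Fin n, (y i.castSucc - c) * w i.castSucc ≤ 0 :=
      sum_mul_nonpos_of_antitone_of_sum_Iic_nonpos
        (fun i j hij => sub_le_sub_right (hy (Fin.castSucc_le_castSucc_iff.2 hij)) c)
        (fun i => sub_nonneg.2 (hc ▸ hy (Fin.le_last _)))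
        (fun j => Fin.sum_Iic_castSucc w j ▸ hw j.castSucc)
    have hlast : c * ∑ i, w i ≤ 0 :=
      mul_nonpos_of_nonneg_of_nonpos (hc ▸ hy0 _)
        (by simpa [← Fin.top_eq_last] using hw (Fin.last n))
    linarith

theorem sum_Ici_le_mul_sum_mul_of_antitone {n : ℕ} {y u : Fin n → R} (s : Fin n) (V : R)
    (hy : Antitone y) (hy0 : ∀ i, 0 ≤ y i)
    (hV : ∀ j, (#(Icc s j) : R) ≤ V * ∑ i ∈ Iic j, u i) :
    ∑ i ∈ Ici s, y i ≤ V * ∑ i, y i * u i := by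
  have key := sum_mul_nonpos_of_antitone_of_sum_Iic_nonpos
    (w := fun i => (if s ≤ i then 1 else 0) - V * u i) hy hy0 fun j => by
      have hIcc : {i ∈ Iic j | s ≤ i} = Icc s j := by ext; simp [and_comm]
      rw [sum_sub_distrib, ← mul_sum, sum_boole, hIcc, sub_nonpos]
      exact hV j
  simp only [mul_sub, mul_ite, mul_one, mul_zero, sum_sub_distrib, ← sum_filter] at key
  rw [mul_sum]
  convert sub_nonpos.1 key using 1
  · congr 1; ext i; simp
  · exact sum_congr rfl fun i _ => by ring

end OrderedRing

theorem exists_perm_antitone_comp {α : Type*} [LinearOrder α] {n : ℕ} (x : Fin n → α) :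
    ∃ σ : Equiv.Perm (Fin n), Antitone (x ∘ σ) :=
  ⟨Fin.revPerm.trans (Tuple.sort x), (Tuple.monotone_sort x).comp_antitone Fin.rev_anti⟩

theorem sum_compl_map_Iio {M : Type*} [AddCommMonoid M] {n : ℕ} (x : Fin n → M)
    (σ : Equiv.Perm (Fin n)) (s : Fin n) :
    ∑ i ∈ univ \ (Iio s).map σ.toEmbedding, x i = ∑ i ∈ Ici s, x (σ i) := by
  rw [← map_univ_equiv σ, ← Finset.map_sdiff, sum_map]
  congr 1
  ext i; simp

theorem val_le_sum_compl {n t : ℕ} {v q : Fin n → ℝ} (hvq : ∀ i, 0 ≤ v i * q i)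
    {B : Finset (Fin n)} (hB : #B = t) : val n t v q ≤ ∑ i ∈ univ \ B, v i * q i :=
  csInf_le ⟨0, by rintro _ ⟨C, -, rfl⟩; exact sum_nonneg fun i _ => hvq i⟩ ⟨B, hB, rfl⟩

theorem le_val {n t : ℕ} {v q : Fin n → ℝ} (ht : t ≤ n) {c : ℝ}
    (h : ∀ B : Finset (Fin n), #B = t → c ≤ ∑ i ∈ univ \ B, v i * q i) : c ≤ val n t v q := by
  obtain ⟨B, -, hB⟩ := exists_subset_card_eq (s := (univ : Finset (Fin n))) (by simpa using ht)
  exact le_csInf ⟨_, B, hB, rfl⟩ fun _ ⟨B, hB, hx⟩ => hx ▸ h B hB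

section

variable {n : ℕ} {v : Fin n → ℝ}

-- `k : Fin n` is 0-indexed: the support `Iic k` consists of `k + 1` boxes.
noncomputable def supportRatio (t : ℕ) (v : Fin n → ℝ) (k : Fin n) : ℝ :=
  ((k : ℕ) + 1 - t : ℝ) / ∑ i ∈ Iic k, (v i)⁻¹

noncomputable def prefixDist (v : Fin n → ℝ) (k : Fin n) : Fin n → ℝ :=
  fun i => if i ≤ k then (v i)⁻¹ / ∑ l ∈ Iic k, (v l)⁻¹ else 0

theorem sum_Iic_inv_pos (hpos : ∀ i, 0 < v i) (k : Fin n) : 0 < ∑ i ∈ Iic k, (v i)⁻¹ :=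
  sum_pos (fun i _ => inv_pos.2 (hpos i)) nonempty_Iic

theorem prefixDist_nonneg (hpos : ∀ i, 0 < v i) (k i : Fin n) : 0 ≤ prefixDist v k i := by
  unfold prefixDist
  split_ifs
  · exact div_nonneg (inv_nonneg.2 (hpos i).le) (sum_Iic_inv_pos hpos k).le
  · exact le_rfl

theorem sum_prefixDist (hpos : ∀ i, 0 < v i) (k : Fin n) : ∑ i, prefixDist v k i = 1 := by
  unfold prefixDist
  rw [← sum_filter, filter_ge_eq_Iic, ← sum_div, div_self (sum_Iic_inv_pos hpos k).ne']

theorem mul_prefixDist (hpos : ∀ i, 0 < v i) (k i : Fin n) :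
    v i * prefixDist v k i = if i ≤ k then (∑ l ∈ Iic k, (v l)⁻¹)⁻¹ else 0 := by
  unfold prefixDist
  split_ifs
  · rw [div_eq_mul_inv, ← mul_assoc, mul_inv_cancel₀ (hpos i).ne', one_mul]
  · exact mul_zero _

theorem antitone_mul_prefixDist (hpos : ∀ i, 0 < v i) (k : Fin n) :
    Antitone fun i => v i * prefixDist v k i := by
  intro i j hij
  simp only [mul_prefixDist hpos]
  split_ifs with hj hi hi
  · exact le_rfl
  · exact absurd (hij.trans hj) hi
  · exact inv_nonneg.2 (sum_Iic_inv_pos hpos k).le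
  · exact le_rfl

theorem supportRatio_le_val_prefixDist {t : ℕ} (hpos : ∀ i, 0 < v i) (ht : t ≤ n) (k : Fin n) :
    supportRatio t v k ≤ val n t v (prefixDist v k) := by
  refine le_val ht fun B hB => ?_
  have hcard : (#(Iic k) : ℝ) - #B ≤ #(Iic k \ B) := by
    rw [sub_le_iff_le_add]
    exact_mod_cast card_le_card_sdiff_add_card
  calc supportRatio t v k = (#(Iic k) - #B : ℝ) * (∑ l ∈ Iic k, (v l)⁻¹)⁻¹ := by
        simp [supportRatio, hB, div_eq_mul_inv]
    _ ≤ #(Iic k \ B) * (∑ l ∈ Iic k, (v l)⁻¹)⁻¹ :=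
        mul_le_mul_of_nonneg_right hcard (inv_nonneg.2 (sum_Iic_inv_pos hpos k).le)
    _ = ∑ i ∈ Iic k \ B, (∑ l ∈ Iic k, (v l)⁻¹)⁻¹ := by rw [sum_const, nsmul_eq_mul]
    _ = ∑ i ∈ Iic k \ B, v i * prefixDist v k i := sum_congr rfl fun i hi => by
        rw [mul_prefixDist hpos, if_pos (mem_Iic.1 (mem_sdiff.1 hi).1)]
    _ ≤ ∑ i ∈ univ \ B, v i * prefixDist v k i :=
        sum_le_sum_of_subset_of_nonneg (sdiff_subset_sdiff (subset_univ _) le_rfl)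
          fun i _ _ => mul_nonneg (hpos i).le (prefixDist_nonneg hpos k i)

theorem supportRatio_pos {t : ℕ} (hpos : ∀ i, 0 < v i) (ht : t < n) {k : Fin n}
    (hk : ∀ j, supportRatio t v j ≤ supportRatio t v k) : 0 < supportRatio t v k :=
  (div_pos (by simp) (sum_Iic_inv_pos hpos _)).trans_le (hk ⟨t, ht⟩)

theorem card_Icc_le_supportRatio_mul {t : ℕ} (hpos : ∀ i, 0 < v i) (ht : t < n) {k : Fin n}
    (hk : ∀ j, supportRatio t v j ≤ supportRatio t v k) (j : Fin n) :
    (#(Icc (⟨t, ht⟩ : Fin n) j) : ℝ) ≤ supportRatio t v k * ∑ i ∈ Iic j, (v i)⁻¹ := by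
  have hS := sum_Iic_inv_pos hpos j
  have hj := (div_le_iff₀ hS).1 (hk j)
  rw [Fin.card_Icc]
  rcases le_or_gt t (j + 1) with h | h
  · rw [Nat.cast_sub h]
    push_cast
    exact hj
  · rw [Nat.sub_eq_zero_of_le h.le, Nat.cast_zero]
    exact mul_nonneg (supportRatio_pos hpos ht hk).le hS.le

theorem val_le_supportRatio {t : ℕ} (hv : Antitone v) (hpos : ∀ i, 0 < v i) (ht : t < n)
    {k : Fin n} (hk : ∀ j, supportRatio t v j ≤ supportRatio t v k) {q : Fin n → ℝ}
    (hq0 : ∀ i, 0 ≤ q i) (hq1 : ∑ i, q i = 1) : val n t v q ≤ supportRatio t v k := by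
  obtain ⟨σ, hσ⟩ := exists_perm_antitone_comp fun i => v i * q i
  have hvq : ∀ i, 0 ≤ v i * q i := fun i => mul_nonneg (hpos i).le (hq0 i)
  have hinv : Monotone fun i => (v i)⁻¹ := fun i j hij => inv_anti₀ (hpos j) (hv hij)
  have hrearr := (hσ.antivary hinv).sum_smul_le_sum_smul_comp_perm (σ := σ)
  simp only [smul_eq_mul, Function.comp_apply] at hrearr
  rw [Equiv.sum_comp σ fun i => v i * q i * (v i)⁻¹] at hrearr
  let s : Fin n := ⟨t, ht⟩
  calc val n t v q ≤ ∑ i ∈ univ \ (Iio s).map σ.toEmbedding, v i * q i :=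
        val_le_sum_compl hvq (by simp [s])
    _ = ∑ i ∈ Ici s, v (σ i) * q (σ i) := sum_compl_map_Iio _ σ s
    _ ≤ supportRatio t v k * ∑ i, v (σ i) * q (σ i) * (v i)⁻¹ :=
        sum_Ici_le_mul_sum_mul_of_antitone s _ hσ (fun i => hvq (σ i))
          (card_Icc_le_supportRatio_mul hpos ht hk)
    _ ≤ supportRatio t v k * ∑ i, v i * q i * (v i)⁻¹ :=
        mul_le_mul_of_nonneg_left hrearr (supportRatio_pos hpos ht hk).le
    _ = supportRatio t v k := by
        rw [sum_congr rfl fun i _ => by rw [mul_right_comm, mul_inv_cancel₀ (hpos i).ne', one_mul],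
          hq1, mul_one]

end

/-- For `ℓ = 1`: there exists a distribution `p` maximizing `val` that in
addition satisfies `v 1 * p 1 ≥ v 2 * p 2 ≥ ⋯ ≥ v n * p n`. -/
theorem stmt_4 (n t : ℕ) (v : Fin n → ℝ)
    (hmono : ∀ i j : Fin n, i ≤ j → v j ≤ v i) (hpos : ∀ i, 0 < v i)
    (ht : t < n) :
    ∃ p : Fin n → ℝ, (∀ i, 0 ≤ p i) ∧ (∑ i, p i) = 1 ∧
      (∀ q : Fin n → ℝ, (∀ i, 0 ≤ q i) → (∑ i, q i) = 1 →
        val n t v q ≤ val n t v p) ∧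
      (∀ i j : Fin n, i ≤ j → v j * p j ≤ v i * p i) := by
  have : Nonempty (Fin n) := ⟨⟨t, ht⟩⟩
  obtain ⟨k, hk⟩ := Finite.exists_max (supportRatio t v)
  exact ⟨prefixDist v k, prefixDist_nonneg hpos k, sum_prefixDist hpos k,
    fun q hq0 hq1 => (val_le_supportRatio hmono hpos ht hk hq0 hq1).trans
      (supportRatio_le_val_prefixDist hpos ht.le k),
    antitone_mul_prefixDist hpos k⟩
end

section
/- The linear program max Σ_{i=t+1}^{n} v_i p_i subject to v_{i+1} p_{i+1} ≤ v_i p_i for all i < n, p_i ≥ 0, and Σ_i p_i = 1, has optimal value T* = max_{t+1 ≤ i ≤ n} (i − t)/(Σ_{j=1}^{i} 1/v_j). -/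
open Finset

theorem abel_sum (q w : ℕ → ℝ) (n : ℕ) :
    ∑ i ∈ Finset.range n, q i * w i
      = ∑ i ∈ Finset.range n, (q i - q (i+1)) * (∑ j ∈ Finset.range (i+1), w j)
        + q n * ∑ j ∈ Finset.range n, w j := by
  induction n with
  | zero => simp
  | succ n ih =>
    rw [Finset.sum_range_succ, ih,
      Finset.sum_range_succ (fun i => (q i - q (i+1)) * (∑ j ∈ Finset.range (i+1), w j)),
      Finset.sum_range_succ w]
    ring

theorem fin_filter_sum' {n : ℕ} (P : ℕ → Prop) [DecidablePred P] (f : Fin n → ℝ) (g : ℕ → ℝ)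
    (hfg : ∀ j : Fin n, f j = g (j : ℕ)) :
    ∑ j ∈ Finset.univ.filter (fun j : Fin n => P (j : ℕ)), f j
      = ∑ j ∈ Finset.range n, if P j then g j else 0 := by
  rw [Finset.sum_filter, ← Fin.sum_univ_eq_sum_range (fun j => if P j then g j else 0) n]
  exact Finset.sum_congr rfl (fun j _ => by rw [hfg])

theorem fin_filter_sum_lt {n k : ℕ} (hk : k ≤ n) (f : Fin n → ℝ) (g : ℕ → ℝ)
    (hfg : ∀ j : Fin n, f j = g (j : ℕ)) :
    ∑ j ∈ Finset.univ.filter (fun j : Fin n => (j : ℕ) < k), f j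
      = ∑ j ∈ Finset.range k, g j := by
  rw [fin_filter_sum' (fun j => j < k) f g hfg]
  rw [← Finset.sum_subset (Finset.range_subset_range.2 hk)
    (fun x _ hx => if_neg (fun h => hx (Finset.mem_range.2 h)))]
  exact Finset.sum_congr rfl (fun j hj => if_pos (Finset.mem_range.1 hj))

/-- The linear program `max ∑_{i=t+1}^{n} v i * p i` subject to
`v (i+1) p (i+1) ≤ v i p i` for all `i < n`, `p i ≥ 0` and `∑ p i = 1` has
optimal value `T* = max_{t+1 ≤ i ≤ n} (i − t)/(∑_{j=1}^{i} 1/v j)`. -/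
theorem stmt_9 (n t : ℕ) (v : Fin n → ℝ)
    (hmono : ∀ a b : Fin n, a ≤ b → v b ≤ v a) (hpos : ∀ a, 0 < v a)
    (ht1 : 1 ≤ t) (ht2 : t < n) :
    IsGreatest
      {x : ℝ | ∃ p : Fin n → ℝ,
        (∀ i : ℕ, ∀ h : i + 1 < n,
          v ⟨i + 1, h⟩ * p ⟨i + 1, h⟩ ≤ v ⟨i, Nat.lt_of_succ_lt h⟩ * p ⟨i, Nat.lt_of_succ_lt h⟩) ∧
        (∀ i, 0 ≤ p i) ∧ (∑ i, p i) = 1 ∧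
        x = ∑ i ∈ univ.filter (fun i : Fin n => t ≤ (i : ℕ)), v i * p i}
      (sSup {x : ℝ | ∃ i : ℕ, t + 1 ≤ i ∧ i ≤ n ∧
        x = ((i : ℝ) - t) /
          (∑ j ∈ univ.filter (fun j : Fin n => (j : ℕ) < i), 1 / v j)}) := by
  have hn : 0 < n := lt_of_le_of_lt (Nat.zero_le t) ht2
  set S : Set ℝ := {x : ℝ | ∃ i : ℕ, t + 1 ≤ i ∧ i ≤ n ∧
      x = ((i : ℝ) - t) /
        (∑ j ∈ univ.filter (fun j : Fin n => (j : ℕ) < i), 1 / v j)} with hSdef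
  -- positivity of partial harmonic sums
  have hHpos : ∀ k : ℕ, 0 < k →
      0 < ∑ j ∈ univ.filter (fun j : Fin n => (j : ℕ) < k), 1 / v j := by
    intro k hk
    apply Finset.sum_pos
    · intro j _; exact one_div_pos.2 (hpos j)
    · exact ⟨⟨0, hn⟩, Finset.mem_filter.2 ⟨Finset.mem_univ _, hk⟩⟩
  have hSfin : S.Finite := by
    apply Set.Finite.subset ((Set.finite_Icc (t+1) n).image
      (fun i : ℕ => ((i : ℝ) - t) /
        (∑ j ∈ univ.filter (fun j : Fin n => (j : ℕ) < i), 1 / v j)))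
    rintro x ⟨i, h1, h2, h3⟩
    exact ⟨i, Set.mem_Icc.2 ⟨h1, h2⟩, h3.symm⟩
  have hSne : S.Nonempty :=
    ⟨(((t+1 : ℕ) : ℝ) - t) /
        (∑ j ∈ univ.filter (fun j : Fin n => (j : ℕ) < t + 1), 1 / v j),
      t + 1, le_rfl, ht2, rfl⟩
  have hSbdd : BddAbove S := hSfin.bddAbove
  have hM0 : 0 ≤ sSup S := by
    have h1 : (((t+1 : ℕ) : ℝ) - t) /
        (∑ j ∈ univ.filter (fun j : Fin n => (j : ℕ) < t + 1), 1 / v j) ∈ S :=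
      ⟨t + 1, le_rfl, ht2, rfl⟩
    have h2 := le_csSup hSbdd h1
    have h3 : (0:ℝ) ≤ (((t+1 : ℕ) : ℝ) - t) /
        (∑ j ∈ univ.filter (fun j : Fin n => (j : ℕ) < t + 1), 1 / v j) := by
      apply div_nonneg _ (hHpos (t+1) (by omega)).le
      push_cast; linarith
    linarith
  constructor
  · -- the optimal value is attained
    obtain ⟨i, hi1, hi2, hieq⟩ := hSne.csSup_mem hSfin
    set Hi : ℝ := ∑ j ∈ univ.filter (fun j : Fin n => (j : ℕ) < i), 1 / v j with hHi
    have hHipos : 0 < Hi := hHpos i (by omega)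
    set p : Fin n → ℝ := fun j => if (j : ℕ) < i then 1 / v j / Hi else 0 with hpdef
    have hpval : ∀ j : Fin n, p j = if (j : ℕ) < i then 1 / v j / Hi else 0 := fun j => rfl
    have hpnn : ∀ j, 0 ≤ p j := by
      intro j
      rw [hpval]
      split
      · exact div_nonneg (one_div_nonneg.2 (hpos j).le) hHipos.le
      · exact le_refl 0
    have hvp : ∀ j : Fin n, (j : ℕ) < i → v j * p j = Hi⁻¹ := by
      intro j hj
      rw [hpval, if_pos hj, one_div, div_eq_mul_inv, ← mul_assoc,
        mul_inv_cancel₀ (hpos j).ne', one_mul]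
    refine ⟨p, ?_, hpnn, ?_, ?_⟩
    · intro k hk
      by_cases hki : k + 1 < i
      · rw [hvp ⟨k+1, hk⟩ hki, hvp ⟨k, Nat.lt_of_succ_lt hk⟩ (by simpa using Nat.lt_of_succ_lt hki)]
      · rw [hpval ⟨k+1, hk⟩, if_neg hki, mul_zero]
        exact mul_nonneg (hpos _).le (hpnn _)
    · calc ∑ j, p j
          = ∑ j ∈ univ.filter (fun j : Fin n => (j : ℕ) < i), (1 / v j / Hi) := by
            rw [Finset.sum_filter]
        _ = (∑ j ∈ univ.filter (fun j : Fin n => (j : ℕ) < i), 1 / v j) / Hi :=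
            (Finset.sum_div _ _ _).symm
        _ = 1 := div_self hHipos.ne'
    · rw [hieq]
      have hvp' : ∀ j : Fin n, v j * p j = (fun m : ℕ => if m < i then Hi⁻¹ else 0) (j : ℕ) := by
        intro j
        by_cases hj : (j : ℕ) < i
        · simp only [if_pos hj]; exact hvp j hj
        · simp only [if_neg hj]; rw [hpval, if_neg hj, mul_zero]
      calc ((i : ℝ) - t) / Hi
          = ((i - t : ℕ) : ℝ) * Hi⁻¹ := by
            rw [Nat.cast_sub (by omega), div_eq_mul_inv]
        _ = ((Finset.range n).filter (fun j => t ≤ j ∧ j < i)).card • Hi⁻¹ := by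
            rw [show (Finset.range n).filter (fun j => t ≤ j ∧ j < i) = Finset.Ico t i by
              ext x; simp only [Finset.mem_filter, Finset.mem_range, Finset.mem_Ico]; omega,
              Nat.card_Ico, nsmul_eq_mul]
        _ = ∑ j ∈ (Finset.range n).filter (fun j => t ≤ j ∧ j < i), Hi⁻¹ :=
            (Finset.sum_const _).symm
        _ = ∑ j ∈ Finset.range n, if t ≤ j then (if j < i then Hi⁻¹ else 0) else 0 := by
            rw [Finset.sum_filter]
            exact Finset.sum_congr rfl (fun j _ => by
              by_cases h1 : t ≤ j <;> by_cases h2 : j < i <;> simp [h1, h2])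
        _ = ∑ j ∈ univ.filter (fun j : Fin n => t ≤ (j : ℕ)), v j * p j :=
            (fin_filter_sum' (fun m => t ≤ m) (fun j => v j * p j)
              (fun m => if m < i then Hi⁻¹ else 0) hvp').symm
  · -- upper bound
    rintro x ⟨p, hmon, hp0, hpsum, hxeq⟩
    set q : ℕ → ℝ := fun j => if h : j < n then v ⟨j, h⟩ * p ⟨j, h⟩ else 0 with hqdef
    set w1 : ℕ → ℝ := fun j => if h : j < n then 1 / v ⟨j, h⟩ else 0 with hw1def
    set w2 : ℕ → ℝ := fun j => if t ≤ j then (1:ℝ) else 0 with hw2def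
    have hqnn : ∀ j, 0 ≤ q j := by
      intro j
      rw [hqdef]; dsimp only
      split
      · exact mul_nonneg (hpos _).le (hp0 _)
      · exact le_refl 0
    have hqanti : ∀ j, q (j+1) ≤ q j := by
      intro j
      by_cases h : j + 1 < n
      · rw [hqdef]; dsimp only
        rw [dif_pos h, dif_pos (Nat.lt_of_succ_lt h)]
        exact hmon j h
      · calc q (j+1) = 0 := by rw [hqdef]; exact dif_neg h
          _ ≤ q j := hqnn j
    have hqn : q n = 0 := by rw [hqdef]; exact dif_neg (lt_irrefl n)
    -- sum of p = 1 in terms of q, w1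
    have hsum1 : ∑ j ∈ Finset.range n, q j * w1 j = 1 := by
      rw [← Fin.sum_univ_eq_sum_range (fun j => q j * w1 j) n, ← hpsum]
      apply Finset.sum_congr rfl
      intro j _
      rw [hqdef, hw1def]; dsimp only
      rw [dif_pos j.isLt, dif_pos j.isLt]
      simp only [Fin.eta]
      rw [one_div, mul_comm (v j) (p j), mul_assoc, mul_inv_cancel₀ (hpos j).ne', mul_one]
    -- objective in terms of q, w2
    have hxval : x = ∑ j ∈ Finset.range n, q j * w2 j := by
      rw [hxeq, fin_filter_sum' (fun m => t ≤ m) (fun j => v j * p j) q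
        (fun j => by rw [hqdef]; dsimp only; rw [dif_pos j.isLt])]
      apply Finset.sum_congr rfl
      intro j _
      rw [hw2def]; dsimp only
      split <;> simp
    -- partial sums of w1
    have hW1 : ∀ k : ℕ, k ≤ n → ∑ j ∈ Finset.range k, w1 j
        = ∑ j ∈ univ.filter (fun j : Fin n => (j : ℕ) < k), 1 / v j := by
      intro k hk
      exact (fin_filter_sum_lt hk (fun j => 1 / v j) w1
        (fun j => by rw [hw1def]; dsimp only; rw [dif_pos j.isLt])).symm
    -- partial sums of w2
    have hW2 : ∀ k : ℕ, ∑ j ∈ Finset.range k, w2 j = ((k - t : ℕ) : ℝ) := by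
      intro k
      rw [hw2def]; dsimp only
      rw [← Finset.sum_filter,
        show (Finset.range k).filter (fun j => t ≤ j) = Finset.Ico t k by
          ext x; simp only [Finset.mem_filter, Finset.mem_range, Finset.mem_Ico]; omega,
        Finset.sum_const, Nat.card_Ico, nsmul_eq_mul, mul_one]
    -- key inequality on partial sums
    have key : ∀ k : ℕ, 1 ≤ k → k ≤ n →
        ∑ j ∈ Finset.range k, w2 j ≤ sSup S * ∑ j ∈ Finset.range k, w1 j := by
      intro k hk1 hkn
      rw [hW2 k, hW1 k hkn]
      by_cases hkt : k ≤ t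
      · rw [show k - t = 0 by omega, Nat.cast_zero]
        exact mul_nonneg hM0 (hHpos k (by omega)).le
      · have hmem : ((k : ℝ) - t) /
            (∑ j ∈ univ.filter (fun j : Fin n => (j : ℕ) < k), 1 / v j) ∈ S :=
          ⟨k, by omega, hkn, rfl⟩
        have hle := le_csSup hSbdd hmem
        rw [div_le_iff₀ (hHpos k (by omega))] at hle
        rw [Nat.cast_sub (by omega)]
        linarith
    have ha1 := abel_sum q w1 n
    rw [hqn, zero_mul, add_zero] at ha1
    have ha2 := abel_sum q w2 n
    rw [hqn, zero_mul, add_zero] at ha2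
    calc x = ∑ i ∈ Finset.range n, (q i - q (i+1)) * (∑ j ∈ Finset.range (i+1), w2 j) := by
          rw [hxval, ha2]
      _ ≤ ∑ i ∈ Finset.range n, (q i - q (i+1)) * (sSup S * ∑ j ∈ Finset.range (i+1), w1 j) :=
          Finset.sum_le_sum (fun i hi =>
            mul_le_mul_of_nonneg_left
              (key (i+1) (by omega) (Finset.mem_range.1 hi))
              (sub_nonneg.2 (hqanti i)))
      _ = sSup S * ∑ i ∈ Finset.range n, (q i - q (i+1)) * (∑ j ∈ Finset.range (i+1), w1 j) := by
          rw [Finset.mul_sum]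
          exact Finset.sum_congr rfl (fun i _ => by ring)
      _ = sSup S := by rw [← ha1, hsum1, mul_one]
end

section
/- Feasibility of the dual system: given v_1 ≥ ⋯ ≥ v_n > 0, t < n and T ∈ ℝ, there exist reals y_0, y_1, …, y_n with y_0 = y_n = 0, y_i ≥ 0 for 1 ≤ i ≤ n−1, and y_i − y_{i−1} ≤ T/v_i − [i ≥ t+1] for all 1 ≤ i ≤ n, if and only if T ≥ (i − t)/(Σ_{j=1}^{i} 1/v_j) for all t+1 ≤ i ≤ n. -/
open Finset

/-- Feasibility of the dual system: there exist `y 0, …, y n` with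
`y 0 = y n = 0`, `y i ≥ 0` for `1 ≤ i ≤ n − 1`, and
`y i − y (i−1) ≤ T / v i − [i ≥ t+1]` for `1 ≤ i ≤ n`, if and only if
`T ≥ (i − t)/(∑_{j=1}^{i} 1/v j)` for all `t + 1 ≤ i ≤ n`. -/
theorem stmt_10 (n t : ℕ) (v : Fin n → ℝ) (T : ℝ)
    (hmono : ∀ a b : Fin n, a ≤ b → v b ≤ v a) (hpos : ∀ a, 0 < v a)
    (ht : t < n) :
    (∃ y : ℕ → ℝ, y 0 = 0 ∧ y n = 0 ∧
      (∀ i : ℕ, 1 ≤ i → i ≤ n - 1 → 0 ≤ y i) ∧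
      (∀ i : ℕ, ∀ h1 : 1 ≤ i, ∀ h2 : i ≤ n,
        y i - y (i - 1) ≤ T / v ⟨i - 1, by omega⟩ - (if t + 1 ≤ i then 1 else 0))) ↔
    (∀ i : ℕ, t + 1 ≤ i → i ≤ n →
      ((i : ℝ) - t) / (∑ j ∈ univ.filter (fun j : Fin n => (j : ℕ) < i), 1 / v j) ≤ T) := by
  classical
  set vv : ℕ → ℝ := fun k => if h : k < n then v ⟨k, h⟩ else 1 with hvv
  have hvvpos : ∀ k, 0 < vv k := by
    intro k
    by_cases h : k < n
    · simpa [hvv, h] using hpos ⟨k, h⟩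
    · simp [hvv, h]
  set c : ℕ → ℝ := fun k => T / vv k - (if t ≤ k then 1 else 0) with hc
  set P : ℕ → ℝ := fun i => ∑ k ∈ range i, c k with hP
  set S : ℕ → ℝ := fun i => ∑ k ∈ range i, 1 / vv k with hS
  have hSpos : ∀ i, 1 ≤ i → 0 < S i := by
    intro i hi
    apply Finset.sum_pos (fun k _ => by have := hvvpos k; positivity)
    exact ⟨0, mem_range.2 (by omega)⟩
  have hsum : ∀ i : ℕ, i ≤ n →
      ∑ j ∈ univ.filter (fun j : Fin n => (j : ℕ) < i), 1 / v j = S i := by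
    intro i hi
    rw [sum_filter]
    have h1 : ∀ j : Fin n, (if (j : ℕ) < i then 1 / v j else 0)
        = (fun k => if k < i then 1 / vv k else 0) (j : ℕ) := by
      intro j
      simp only [hvv, j.isLt, dif_pos, Fin.eta]
    rw [Finset.sum_congr rfl (fun j _ => h1 j),
      Fin.sum_univ_eq_sum_range (fun k => if k < i then 1 / vv k else 0) n,
      ← sum_filter]
    have : (range n).filter (· < i) = range i := by
      ext k; simp only [mem_filter, mem_range]; omega
    rw [this]
  have hPS : ∀ i, t ≤ i → P i = T * S i - ((i : ℝ) - t) := by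
    intro i hti
    have h1 : P i = ∑ k ∈ range i, T / vv k
        - ∑ k ∈ range i, (if t ≤ k then (1 : ℝ) else 0) := by
      simp only [hP, hc]
      rw [← Finset.sum_sub_distrib]
    have h2 : ∑ k ∈ range i, (if t ≤ k then (1 : ℝ) else 0) = ((i : ℝ) - t) := by
      rw [Finset.sum_boole]
      have : (range i).filter (fun k => t ≤ k) = Finset.Ico t i := by
        ext k; simp only [mem_filter, mem_range, mem_Ico]; omega
      rw [this, Nat.card_Ico, Nat.cast_sub hti]
    have h3 : ∑ k ∈ range i, T / vv k = T * S i := by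
      simp only [hS, Finset.mul_sum]
      apply Finset.sum_congr rfl
      intro k _; rw [mul_one_div]
    rw [h1, h2, h3]
  have hPsucc : ∀ i, 1 ≤ i → P i = P (i - 1) + c (i - 1) := by
    intro i hi
    conv_lhs => rw [show i = (i - 1) + 1 by omega]
    simp only [hP]
    exact Finset.sum_range_succ c (i - 1)
  have hrhs : ∀ i : ℕ, ∀ h1 : 1 ≤ i, ∀ h2 : i ≤ n,
      T / v ⟨i - 1, by omega⟩ - (if t + 1 ≤ i then (1 : ℝ) else 0) = c (i - 1) := by
    intro i h1 h2
    have hlt : i - 1 < n := by omega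
    have hiff : (t + 1 ≤ i) ↔ (t ≤ i - 1) := by omega
    simp only [hc, hvv, dif_pos hlt, hiff]
  constructor
  · rintro ⟨y, h0, hn, hnn, hcon⟩ i hti hin
    have key : ∀ m, m ≤ n → y m ≤ P m := by
      intro m
      induction m with
      | zero => intro _; simp [h0, hP]
      | succ m ih =>
        intro hm
        have h1 := hcon (m + 1) (by omega) hm
        rw [hrhs (m + 1) (by omega) hm] at h1
        simp only [Nat.add_sub_cancel] at h1
        have h2 := ih (by omega)
        have h3 := hPsucc (m + 1) (by omega)
        simp only [Nat.add_sub_cancel] at h3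
        linarith
    have hy : 0 ≤ y i := by
      rcases eq_or_lt_of_le hin with h | h
      · rw [h, hn]
      · exact hnn i (by omega) (by omega)
    have h4 := key i hin
    have h5 := hPS i (by omega)
    have hs := hSpos i (by omega)
    rw [hsum i hin, div_le_iff₀ hs]
    linarith
  · intro hT
    have hTpos : 0 < T := by
      have h1 := hT n (by omega) le_rfl
      rw [hsum n le_rfl] at h1
      have hs := hSpos n (by omega)
      have hnt : (0 : ℝ) < (n : ℝ) - t := by
        have : (t : ℝ) < n := by exact_mod_cast ht
        linarith
      calc (0 : ℝ) < ((n : ℝ) - t) / S n := div_pos hnt hs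
        _ ≤ T := h1
    have hPnonneg : ∀ i, i ≤ n → 0 ≤ P i := by
      intro i hin
      by_cases h : t + 1 ≤ i
      · have h1 := hT i h hin
        rw [hsum i hin, div_le_iff₀ (hSpos i (by omega))] at h1
        rw [hPS i (by omega)]
        linarith
      · apply Finset.sum_nonneg
        intro k hk
        have hki : k < i := mem_range.1 hk
        have : ¬ t ≤ k := by omega
        simp only [hc, this, if_false, sub_zero]
        exact le_of_lt (div_pos hTpos (hvvpos k))
    refine ⟨fun i => if i = 0 ∨ n ≤ i then 0 else P i, by simp, by simp, ?_, ?_⟩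
    · intro i h1 h2
      have hni : ¬(i = 0 ∨ n ≤ i) := by omega
      show (0:ℝ) ≤ if i = 0 ∨ n ≤ i then 0 else P i
      rw [if_neg hni]
      exact hPnonneg i (by omega)
    · intro i h1 h2
      rw [hrhs i h1 h2]
      show (if i = 0 ∨ n ≤ i then (0:ℝ) else P i)
        - (if i - 1 = 0 ∨ n ≤ i - 1 then (0:ℝ) else P (i - 1)) ≤ c (i - 1)
      have hprev : (if i - 1 = 0 ∨ n ≤ i - 1 then (0 : ℝ) else P (i - 1)) = P (i - 1) := by
        by_cases h : i - 1 = 0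
        · rw [if_pos (Or.inl h), h]
          simp [hP]
        · rw [if_neg (by omega)]
      simp only [hprev]
      rcases eq_or_lt_of_le h2 with h | h
      · rw [← h, if_pos (Or.inr (le_refl i))]
        have h3 := hPsucc i h1
        have h4 := hPnonneg i h2
        linarith
      · have hni : ¬(i = 0 ∨ n ≤ i) := by omega
        rw [if_neg hni]
        have h3 := hPsucc i h1
        linarith
end

section
/- Randomized rounding / integral decomposition: for any p' : [n] → [0,1] with Σ_{i=1}^{n} p'_i = ℓ (ℓ a positive integer, ℓ ≤ n), there exists a probability distribution p over ℓ-element subsets of [n] whose marginals are exactly p', i.e., Σ_{S : i ∈ S} p(S) = p'_i for every i ∈ [n]. -/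
open Finset

/-!
The hypersimplex `{x ∈ [0,1]ⁿ | ∑ xᵢ = ℓ}` is compact and convex, so by Krein–Milman it is the
convex hull of its extreme points. An extreme point has no fractional coordinate: since the
coordinates sum to an integer, a fractional coordinate `xᵢ` forces a second one `xⱼ`, and moving
mass `±ε` between `i` and `j` writes `x` as the midpoint of two other points of the hypersimplex.
Hence every point is a convex combination of indicator vectors of `ℓ`-sets, and the weights of
that combination form the required distribution.
-/

variable {ι : Type*}

theorem exists_weights_of_mem_convexHull_image {E : Type*} [AddCommGroup E] [Module ℝ E]
    [Fintype ι] {v : ι → E} {s : Set ι} {x : E} (hx : x ∈ convexHull ℝ (v '' s)) :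
    ∃ w : ι → ℝ, (∀ a, 0 ≤ w a) ∧ (∀ a ∉ s, w a = 0) ∧ ∑ a, w a = 1 ∧ ∑ a, w a • v a = x := by
  classical
  suffices convexHull ℝ (v '' s) ⊆
      {x | ∃ w : ι → ℝ, (∀ a, 0 ≤ w a) ∧ (∀ a ∉ s, w a = 0) ∧ ∑ a, w a = 1 ∧
        ∑ a, w a • v a = x} from this hx
  refine convexHull_min ?_ ?_
  · rintro _ ⟨a, ha, rfl⟩
    refine ⟨Pi.single a 1, fun b => ?_, fun b hb => ?_, by simp, by simp⟩
    · rcases eq_or_ne b a with rfl | hba <;> simp [*]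
    · simp [ne_of_mem_of_not_mem ha hb |>.symm]
  · rintro _ ⟨w₁, h₁0, h₁s, h₁1, rfl⟩ _ ⟨w₂, h₂0, h₂s, h₂1, rfl⟩ a b ha hb hab
    refine ⟨a • w₁ + b • w₂, fun c => ?_, fun c hc => ?_, ?_, ?_⟩
    · exact add_nonneg (mul_nonneg ha (h₁0 c)) (mul_nonneg hb (h₂0 c))
    · simp [h₁s c hc, h₂s c hc]
    · simp [sum_add_distrib, ← mul_sum, h₁1, h₂1, hab]
    · simp [add_smul, mul_smul, sum_add_distrib, smul_sum]

def indicatorVector [DecidableEq ι] (S : Finset ι) : ι → ℝ := fun i => if i ∈ S then 1 else 0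

theorem sum_smul_indicatorVector_apply [DecidableEq ι] (s : Finset (Finset ι))
    (w : Finset ι → ℝ) (i : ι) :
    (∑ S ∈ s, w S • indicatorVector S) i = ∑ S ∈ s.filter (i ∈ ·), w S := by
  simp [indicatorVector, sum_filter]

variable [Fintype ι]

theorem sum_indicatorVector [DecidableEq ι] (S : Finset ι) : ∑ i, indicatorVector S i = #S := by
  simp [indicatorVector]

def hypersimplex (ι : Type*) [Fintype ι] (ℓ : ℕ) : Set (ι → ℝ) :=
  Set.pi Set.univ (fun _ => Set.Icc 0 1) ∩ {x | ∑ i, x i = ℓ}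

theorem isCompact_hypersimplex (ℓ : ℕ) : IsCompact (hypersimplex ι ℓ) :=
  (isCompact_univ_pi fun _ => isCompact_Icc).inter_right
    (isClosed_eq (by fun_prop) continuous_const)

theorem convex_hypersimplex (ℓ : ℕ) : Convex ℝ (hypersimplex ι ℓ) :=
  (convex_pi fun _ _ => convex_Icc 0 1).inter
    (convex_hyperplane (f := fun x : ι → ℝ => ∑ i, x i)
      ⟨fun _ _ => sum_add_distrib, fun _ _ => (mul_sum ..).symm⟩ _)

theorem indicatorVector_mem_hypersimplex [DecidableEq ι] (S : Finset ι) :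
    indicatorVector S ∈ hypersimplex ι #S :=
  ⟨fun i _ => by unfold indicatorVector; split_ifs <;> simp, sum_indicatorVector S⟩

theorem exists_ne_mem_Ioo_of_mem_hypersimplex {ℓ : ℕ} {x : ι → ℝ} (hx : x ∈ hypersimplex ι ℓ)
    {i : ι} (hi : x i ∈ Set.Ioo 0 1) : ∃ j ≠ i, x j ∈ Set.Ioo 0 1 := by
  classical
  by_contra! h
  have hint : ∀ j ∈ univ.erase i, x j = 0 ∨ x j = 1 := fun j hj => by
    have ⟨h0, h1⟩ := hx.1 j (Set.mem_univ j)
    have := h j (ne_of_mem_erase hj)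
    simp only [Set.mem_Ioo, not_and, not_lt] at this
    rcases h0.lt_or_eq with h0 | h0
    · exact Or.inr (le_antisymm h1 (this h0))
    · exact Or.inl h0.symm
  set c := #((univ.erase i).filter (x · = 1))
  have hrest : ∑ j ∈ univ.erase i, x j = c := by
    rw [natCast_card_filter]
    refine sum_congr rfl fun j hj => ?_
    rcases hint j hj with h | h <;> simp [h]
  have hxi : x i = ℓ - c := by
    rw [← hx.2, ← add_sum_erase _ _ (mem_univ i), hrest]; ring
  rw [hxi, Set.mem_Ioo, sub_pos, sub_lt_iff_lt_add'] at hi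
  norm_cast at hi
  omega

theorem add_single_sub_single_mem_hypersimplex [DecidableEq ι] {ℓ : ℕ} {x : ι → ℝ}
    (hx : x ∈ hypersimplex ι ℓ) {i j : ι} (hij : i ≠ j) {ε : ℝ} (hi : x i + ε ∈ Set.Icc 0 1)
    (hj : x j - ε ∈ Set.Icc 0 1) : x + Pi.single i ε - Pi.single j ε ∈ hypersimplex ι ℓ := by
  refine ⟨fun k _ => ?_, ?_⟩
  · rcases eq_or_ne k i with rfl | hki
    · simpa [hij] using hi
    rcases eq_or_ne k j with rfl | hkj
    · simpa [hki] using hj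
    simpa [hki, hkj] using hx.1 k (Set.mem_univ k)
  · simpa [sum_add_distrib, sum_sub_distrib] using hx.2

theorem eq_zero_or_eq_one_of_mem_extremePoints_hypersimplex {ℓ : ℕ} {x : ι → ℝ}
    (hx : x ∈ (hypersimplex ι ℓ).extremePoints ℝ) (i : ι) : x i = 0 ∨ x i = 1 := by
  classical
  by_contra! hfrac
  have ⟨h0, h1⟩ := hx.1.1 i (Set.mem_univ i)
  have hi : x i ∈ Set.Ioo 0 1 := ⟨h0.lt_of_ne' hfrac.1, h1.lt_of_ne hfrac.2⟩
  obtain ⟨j, hji, hj⟩ := exists_ne_mem_Ioo_of_mem_hypersimplex hx.1 hi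
  set ε := min (min (x i) (1 - x i)) (min (x j) (1 - x j))
  have hε : 0 < ε := by
    simp only [ε, lt_min_iff, sub_pos]; exact ⟨⟨hi.1, hi.2⟩, hj.1, hj.2⟩
  have hεi : ε ≤ x i ∧ ε ≤ 1 - x i := ⟨by simp [ε], by simp [ε]⟩
  have hεj : ε ≤ x j ∧ ε ≤ 1 - x j := ⟨by simp [ε], by simp [ε]⟩
  have hy := add_single_sub_single_mem_hypersimplex hx.1 hji.symm (ε := ε)
    ⟨by linarith, by linarith⟩ ⟨by linarith, by linarith⟩
  have hz := add_single_sub_single_mem_hypersimplex hx.1 hji.symm (ε := -ε)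
    ⟨by linarith, by linarith⟩ ⟨by linarith, by linarith⟩
  have hmid : x ∈ openSegment ℝ (x + Pi.single i ε - Pi.single j ε)
      (x + Pi.single i (-ε) - Pi.single j (-ε)) :=
    ⟨1 / 2, 1 / 2, by norm_num, by norm_num, by norm_num, by
      ext k; simp only [Pi.add_apply, Pi.sub_apply, Pi.smul_apply, Pi.single_neg, smul_eq_mul,
        Pi.neg_apply]; ring⟩
  have hyi := congrFun (hx.2 hy hz hmid) i
  simp [hji.symm] at hyi
  exact hε.ne' hyi

theorem mem_image_indicatorVector_of_mem_hypersimplex [DecidableEq ι] {ℓ : ℕ} {x : ι → ℝ}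
    (hx : x ∈ hypersimplex ι ℓ) (h01 : ∀ i, x i = 0 ∨ x i = 1) :
    x ∈ indicatorVector '' {S | #S = ℓ} := by
  set S := univ.filter (x · = 1)
  have hxS : indicatorVector S = x := funext fun i => by
    rcases h01 i with h | h <;> simp [indicatorVector, S, h]
  refine ⟨S, ?_, hxS⟩
  exact_mod_cast (sum_indicatorVector S).symm.trans (hxS ▸ hx.2)

theorem convexHull_indicatorVector_eq_hypersimplex [DecidableEq ι] (ℓ : ℕ) :
    convexHull ℝ (indicatorVector '' {S : Finset ι | #S = ℓ}) = hypersimplex ι ℓ := by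
  refine (convexHull_min ?_ (convex_hypersimplex ℓ)).antisymm ?_
  · rintro _ ⟨S, rfl, rfl⟩
    exact indicatorVector_mem_hypersimplex S
  have hext : (hypersimplex ι ℓ).extremePoints ℝ ⊆ indicatorVector '' {S | #S = ℓ} :=
    fun x hx => mem_image_indicatorVector_of_mem_hypersimplex hx.1
      (eq_zero_or_eq_one_of_mem_extremePoints_hypersimplex hx)
  have hclosed : IsClosed (convexHull ℝ (indicatorVector '' {S : Finset ι | #S = ℓ})) :=
    ((Set.toFinite _).isCompact_convexHull ℝ).isClosed
  calc hypersimplex ι ℓ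
      = closure (convexHull ℝ ((hypersimplex ι ℓ).extremePoints ℝ)) :=
        (closure_convexHull_extremePoints (isCompact_hypersimplex ℓ) (convex_hypersimplex ℓ)).symm
    _ ⊆ _ := closure_minimal (convexHull_mono hext) hclosed

theorem stmt_12_general (n ℓ : ℕ) (p' : Fin n → ℝ)
    (hp0 : ∀ i, 0 ≤ p' i) (hp1 : ∀ i, p' i ≤ 1) (hsum : ∑ i, p' i = ℓ) :
    ∃ p : Finset (Fin n) → ℝ,
      (∀ S, 0 ≤ p S) ∧ (∀ S, S.card ≠ ℓ → p S = 0) ∧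
      (∑ S : Finset (Fin n), p S) = 1 ∧
      (∀ i : Fin n, ∑ S ∈ univ.filter (fun S : Finset (Fin n) => i ∈ S), p S = p' i) := by
  have hp' : p' ∈ hypersimplex (Fin n) ℓ := ⟨fun i _ => ⟨hp0 i, hp1 i⟩, hsum⟩
  rw [← convexHull_indicatorVector_eq_hypersimplex] at hp'
  obtain ⟨p, hp_nonneg, hp_card, hp_sum, hp_marg⟩ := exists_weights_of_mem_convexHull_image hp'
  refine ⟨p, hp_nonneg, hp_card, hp_sum, fun i => ?_⟩
  rw [← sum_smul_indicatorVector_apply, hp_marg]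

/-- Randomized rounding: any `p' : [n] → [0,1]` with `∑ p' i = ℓ` (for a
positive integer `ℓ ≤ n`) arises as the marginals of a probability
distribution over `ℓ`-element subsets of `[n]`. -/
theorem stmt_12 (n ℓ : ℕ) (hℓ1 : 1 ≤ ℓ) (hℓn : ℓ ≤ n) (p' : Fin n → ℝ)
    (hp0 : ∀ i, 0 ≤ p' i) (hp1 : ∀ i, p' i ≤ 1) (hsum : ∑ i, p' i = ℓ) :
    ∃ p : Finset (Fin n) → ℝ,
      (∀ S, 0 ≤ p S) ∧ (∀ S, S.card ≠ ℓ → p S = 0) ∧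
      (∑ S : Finset (Fin n), p S) = 1 ∧
      (∀ i : Fin n, ∑ S ∈ univ.filter (fun S : Finset (Fin n) => i ∈ S), p S = p' i) :=
  stmt_12_general n ℓ p' hp0 hp1 hsum
end

section
/- There exists a pseudo-distribution p ∈ Δ_{≤ℓ}([n]) maximizing val(p) that satisfies v_1 p_1 ≥ v_2 p_2 ≥ ⋯ ≥ v_n p_n. -/
open Finset

/-!
`val p` depends only on the multiset of products `v i * p i`, so sorting these products in
decreasing order and dividing back by `v` gives a vector with the same `val`. It stays in the
box because the `k`-th largest product is at most `v k` (as `v` is decreasing), and its mass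
does not grow by the rearrangement inequality, as `1 / v` is increasing. So sorting a maximizer
of the continuous function `val` on the compact set `Δ_{≤ℓ}` gives a sorted maximizer.
-/

section Rearrangement

variable {n : ℕ} {α : Type*} [LinearOrder α]

def antitoneSort (c : Fin n → α) : Equiv.Perm (Fin n) :=
  Fin.revPerm.trans (Tuple.sort c)

lemma antitone_comp_antitoneSort (c : Fin n → α) : Antitone (c ∘ antitoneSort c) :=
  fun _ _ hij => Tuple.monotone_sort c (Fin.rev_le_rev.2 hij)

lemma comp_antitoneSort_le {c v : Fin n → α} (hv : Antitone v) (hcv : c ≤ v) (i : Fin n) :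
    c (antitoneSort c i) ≤ v i := by
  set π := antitoneSort c
  -- pigeonhole: `π` cannot map the `i + 1` indices `≤ i` into the `i` indices `< i`
  obtain ⟨k, hki, hik⟩ : ∃ k ≤ i, i ≤ π k := by
    by_contra! h
    have hsub : (Iic i).image π ⊆ Iio i := fun x hx => by
      obtain ⟨k, hk, rfl⟩ := mem_image.1 hx
      exact mem_Iio.2 (h k (mem_Iic.1 hk))
    have := card_le_card hsub
    rw [card_image_of_injective _ π.injective, Fin.card_Iic, Fin.card_Iio] at this
    omega
  calc c (π i) ≤ c (π k) := antitone_comp_antitoneSort c hki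
    _ ≤ v (π k) := hcv _
    _ ≤ v i := hv hik

end Rearrangement

lemma sum_comp_antitoneSort_div_le {n : ℕ} {c v : Fin n → ℝ} (hv : Antitone v)
    (hpos : ∀ i, 0 < v i) :
    ∑ i, c (antitoneSort c i) / v i ≤ ∑ i, c i / v i := by
  have hinv : Monotone fun i => (v i)⁻¹ := fun i j hij => inv_anti₀ (hpos j) (hv hij)
  have h := ((antitone_comp_antitoneSort c).antivary hinv).sum_mul_le_sum_comp_perm_mul
    (σ := (antitoneSort c).symm)
  simpa [div_eq_mul_inv] using h

lemma val_eq_of_mul_eq_comp_perm {n t : ℕ} {v p w q : Fin n → ℝ} (σ : Equiv.Perm (Fin n))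
    (h : ∀ i, v i * p i = w (σ i) * q (σ i)) : val n t v p = val n t w q := by
  unfold _root_.val
  congr 1
  ext x
  constructor
  · rintro ⟨B, rfl, rfl⟩
    refine ⟨B.map σ.toEmbedding, card_map _, sum_equiv σ (by simp) fun i _ => h i⟩
  · rintro ⟨B, rfl, rfl⟩
    refine ⟨B.map σ.symm.toEmbedding, by simp, (sum_equiv σ (by simp) fun i _ => h i).symm⟩

lemma val_eq_inf' {n t : ℕ} (ht : t ≤ n) (v p : Fin n → ℝ) :
    val n t v p = ((univ : Finset (Fin n)).powersetCard t).inf'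
      (powersetCard_nonempty.2 (by simpa using ht)) (fun B => ∑ i ∈ univ \ B, v i * p i) := by
  rw [inf'_eq_csInf_image]
  unfold _root_.val
  congr 1
  ext x
  simp [eq_comm]

lemma val_of_lt {n t : ℕ} (ht : n < t) (v p : Fin n → ℝ) : val n t v p = 0 := by
  have hempty : {x : ℝ | ∃ B : Finset (Fin n), B.card = t ∧ x = ∑ i ∈ univ \ B, v i * p i} = ∅ :=
    Set.eq_empty_of_forall_notMem fun _ ⟨B, hB, _⟩ => by
      have := B.card_le_univ
      rw [Fintype.card_fin] at this
      omega
  rw [_root_.val, hempty, Real.sInf_empty]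

lemma continuous_val (n t : ℕ) (v : Fin n → ℝ) : Continuous (val n t v) := by
  rcases le_or_gt t n with ht | ht
  · simp_rw [funext (val_eq_inf' ht v)]
    exact Continuous.finset_inf'_apply _ fun B _ => by fun_prop
  · simp_rw [funext (val_of_lt ht v)]
    exact continuous_const

lemma exists_antitone_mul_val_eq {n t : ℕ} {v : Fin n → ℝ} (hv : Antitone v)
    (hpos : ∀ i, 0 < v i) (q : Fin n → ℝ) (hq : ∀ i, 0 ≤ q i ∧ q i ≤ 1) :
    ∃ p : Fin n → ℝ, (∀ i, 0 ≤ p i ∧ p i ≤ 1) ∧ ∑ i, p i ≤ ∑ i, q i ∧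
      Antitone (fun i => v i * p i) ∧ val n t v p = val n t v q := by
  set c : Fin n → ℝ := fun i => v i * q i
  set π := antitoneSort c
  have hmul : ∀ i, v i * (c (π i) / v i) = c (π i) := fun i =>
    mul_div_cancel₀ _ (hpos i).ne'
  have hcv : c ≤ v := fun i => mul_le_of_le_one_right (hpos i).le (hq i).2
  refine ⟨fun i => c (π i) / v i, fun i => ⟨?_, ?_⟩, ?_, ?_, ?_⟩
  · exact div_nonneg (mul_nonneg (hpos _).le (hq _).1) (hpos i).le
  · exact (div_le_one (hpos i)).2 (comp_antitoneSort_le hv hcv i)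
  · calc ∑ i, c (π i) / v i ≤ ∑ i, c i / v i := sum_comp_antitoneSort_div_le hv hpos
      _ = ∑ i, q i := sum_congr rfl fun i _ => mul_div_cancel_left₀ _ (hpos i).ne'
  · intro i j hij
    simp only [hmul]
    exact antitone_comp_antitoneSort c hij
  · exact val_eq_of_mul_eq_comp_perm π hmul

lemma isCompact_setOf_mem_Icc_sum_le (ι : Type*) [Fintype ι] (L : ℝ) :
    IsCompact {q : ι → ℝ | (∀ i, 0 ≤ q i ∧ q i ≤ 1) ∧ ∑ i, q i ≤ L} := by
  have hIcc : {q : ι → ℝ | ∀ i, 0 ≤ q i ∧ q i ≤ 1} = Set.Icc 0 1 := by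
    ext q
    simp [forall_and, Pi.le_def]
  rw [Set.ofPred_and, hIcc]
  exact isCompact_Icc.inter_right (isClosed_le (by fun_prop) continuous_const)

theorem stmt_13_general (n t ℓ : ℕ) (v : Fin n → ℝ)
    (hmono : ∀ i j : Fin n, i ≤ j → v j ≤ v i) (hpos : ∀ i, 0 < v i) :
    ∃ p : Fin n → ℝ, (∀ i, 0 ≤ p i ∧ p i ≤ 1) ∧ (∑ i, p i) ≤ ℓ ∧
      (∀ q : Fin n → ℝ, (∀ i, 0 ≤ q i ∧ q i ≤ 1) → (∑ i, q i) ≤ ℓ →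
        val n t v q ≤ val n t v p) ∧
      (∀ i j : Fin n, i ≤ j → v j * p j ≤ v i * p i) := by
  have hv : Antitone v := fun i j hij => hmono i j hij
  obtain ⟨p₀, ⟨hp₀, hp₀ℓ⟩, hmax⟩ := (isCompact_setOf_mem_Icc_sum_le (Fin n) ℓ).exists_isMaxOn
    ⟨0, fun _ => ⟨le_rfl, zero_le_one⟩, by simp⟩ (continuous_val n t v).continuousOn
  obtain ⟨p, hp, hpp₀, hanti, hval⟩ := exists_antitone_mul_val_eq (t := t) hv hpos p₀ hp₀
  refine ⟨p, hp, hpp₀.trans hp₀ℓ, fun q hq hqℓ => hval ▸ hmax ⟨hq, hqℓ⟩, fun i j hij => hanti hij⟩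

/-- There exists a pseudo-distribution `p ∈ Δ_{≤ℓ}([n])` maximizing `val p`
with non-increasing products `v 1 p 1 ≥ ⋯ ≥ v n p n`. -/
theorem stmt_13 (n t ℓ : ℕ) (v : Fin n → ℝ)
    (hmono : ∀ i j : Fin n, i ≤ j → v j ≤ v i) (hpos : ∀ i, 0 < v i)
    (ht1 : 1 ≤ t) (ht : t < n) (hℓ1 : 1 ≤ ℓ) (hℓ : ℓ < n) :
    ∃ p : Fin n → ℝ, (∀ i, 0 ≤ p i ∧ p i ≤ 1) ∧ (∑ i, p i) ≤ ℓ ∧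
      (∀ q : Fin n → ℝ, (∀ i, 0 ≤ q i ∧ q i ≤ 1) → (∑ i, q i) ≤ ℓ →
        val n t v q ≤ val n t v p) ∧
      (∀ i j : Fin n, i ≤ j → v j * p j ≤ v i * p i) :=
  stmt_13_general n t ℓ v hmono hpos
end

section
/- A maximal E-nice pseudo-distribution in Δ_{≤ℓ}([n]) exists if and only if 0 ≤ E ≤ E_max := min{ v_{t+1}, ℓ · (Σ_{k=1}^{t+1} 1/v_k)^{−1} }. -/
open Finset

/-- `p` is a pseudo-distribution in `Δ_{≤ℓ}([n])`. -/
def IsPseudo (n ℓ : ℕ) (p : Fin n → ℝ) : Prop :=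
  (∀ i, 0 ≤ p i ∧ p i ≤ 1) ∧ (∑ i, p i) ≤ ℓ

/-- `p` is `(E, i)`-nice (`i` is 1-indexed, `t + 1 ≤ i ≤ n`). -/
def IsNiceAt (n t : ℕ) (v : Fin n → ℝ) (E : ℝ) (i : ℕ) (p : Fin n → ℝ) : Prop :=
  t + 1 ≤ i ∧ i ≤ n ∧
  (∀ k : Fin n, (k : ℕ) ≤ t → v k * p k = E) ∧
  (∀ k : Fin n, (k : ℕ) < i → p k = min 1 (E / v k)) ∧
  (∀ h : i < n, p ⟨i, h⟩ < min 1 (E / v ⟨i, h⟩)) ∧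
  (∀ k : Fin n, i + 1 ≤ (k : ℕ) → p k = 0)

/-- `p` is `E`-nice. -/
def IsNice (n t : ℕ) (v : Fin n → ℝ) (E : ℝ) (p : Fin n → ℝ) : Prop :=
  ∃ i : ℕ, IsNiceAt n t v E i p

/-- A maximal `E`-nice pseudo-distribution exists if and only if
`0 ≤ E ≤ E_max := min (v (t+1)) (ℓ · (∑_{k=1}^{t+1} 1/v k)⁻¹)`. -/
theorem stmt_16 (n t ℓ : ℕ) (v : Fin n → ℝ)
    (hmono : ∀ i j : Fin n, i ≤ j → v j ≤ v i) (hpos : ∀ i, 0 < v i)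
    (ht1 : 1 ≤ t) (ht : t < n) (hℓ1 : 1 ≤ ℓ) (hℓ : ℓ < n) (E : ℝ) :
    (∃ p : Fin n → ℝ, IsPseudo n ℓ p ∧ IsNice n t v E p ∧
      ¬∃ q : Fin n → ℝ, IsPseudo n ℓ q ∧ IsNice n t v E q ∧
        (∀ i, p i ≤ q i) ∧ (∃ i, p i < q i)) ↔
    (0 ≤ E ∧ E ≤ min (v ⟨t, ht⟩)
      ((ℓ : ℝ) * (∑ k ∈ univ.filter (fun k : Fin n => (k : ℕ) ≤ t), 1 / v k)⁻¹)) := by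
  classical
  constructor
  · rintro ⟨p, ⟨hp01, hpsum⟩, ⟨i, hti, hin, hEk, hlti, -, -⟩, -⟩
    have hvE : v ⟨t, ht⟩ * p ⟨t, ht⟩ = E := hEk ⟨t, ht⟩ (le_refl t)
    have hE0 : 0 ≤ E := hvE ▸ mul_nonneg (hpos _).le (hp01 _).1
    have hpk0 : p ⟨t, ht⟩ = min 1 (E / v ⟨t, ht⟩) := hlti ⟨t, ht⟩ hti
    have hEv : E ≤ v ⟨t, ht⟩ := by
      rcases le_total (E / v ⟨t, ht⟩) 1 with h | h
      · exact (div_le_one (hpos _)).mp h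
      · rw [hpk0, min_eq_left h, mul_one] at hvE; linarith
    have hSpos : 0 < ∑ k ∈ univ.filter (fun k : Fin n => (k : ℕ) ≤ t), 1 / v k :=
      Finset.sum_pos (fun k _ => one_div_pos.mpr (hpos k)) ⟨⟨0, by omega⟩, by simp⟩
    have hpeq : ∀ k ∈ univ.filter (fun k : Fin n => (k : ℕ) ≤ t), p k = E * (1 / v k) := by
      intro k hk
      have hk' : (k : ℕ) ≤ t := by simpa using hk
      have h1 := hEk k hk'
      have h2 : v k ≠ 0 := (hpos k).ne'
      field_simp
      linarith
    have h1 : E * (∑ k ∈ univ.filter (fun k : Fin n => (k : ℕ) ≤ t), 1 / v k) ≤ ℓ := by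
      calc E * ∑ k ∈ univ.filter (fun k : Fin n => (k : ℕ) ≤ t), 1 / v k
          = ∑ k ∈ univ.filter (fun k : Fin n => (k : ℕ) ≤ t), E * (1 / v k) :=
            Finset.mul_sum _ _ _
        _ = ∑ k ∈ univ.filter (fun k : Fin n => (k : ℕ) ≤ t), p k :=
            (Finset.sum_congr rfl hpeq).symm
        _ ≤ ∑ k, p k :=
            Finset.sum_le_sum_of_subset_of_nonneg (filter_subset _ _)
              (fun i _ _ => (hp01 i).1)
        _ ≤ ℓ := hpsum
    refine ⟨hE0, le_min hEv ?_⟩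
    rw [← div_eq_mul_inv]
    exact (le_div_iff₀ hSpos).mpr h1
  · rintro ⟨hE0, hEmax⟩
    have hEv : E ≤ v ⟨t, ht⟩ := hEmax.trans (min_le_left _ _)
    have hSpos : 0 < ∑ k ∈ univ.filter (fun k : Fin n => (k : ℕ) ≤ t), 1 / v k :=
      Finset.sum_pos (fun k _ => one_div_pos.mpr (hpos k)) ⟨⟨0, by omega⟩, by simp⟩
    have hES : E * (∑ k ∈ univ.filter (fun k : Fin n => (k : ℕ) ≤ t), 1 / v k) ≤ ℓ := by
      have h2 : E ≤ (ℓ : ℝ) / (∑ k ∈ univ.filter (fun k : Fin n => (k : ℕ) ≤ t), 1 / v k) := by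
        rw [div_eq_mul_inv]; exact hEmax.trans (min_le_right _ _)
      exact (le_div_iff₀ hSpos).mp h2
    rcases eq_or_lt_of_le hE0 with hE0' | hEpos
    · -- E = 0 : the zero distribution is the unique nice distribution
      refine ⟨0, ⟨fun i => ⟨le_refl 0, zero_le_one⟩, by simp⟩,
        ⟨n, by omega, le_refl n, fun k _ => by simp [← hE0'],
          fun k _ => by simp [← hE0'], fun h => absurd h (lt_irrefl n),
          fun k _ => rfl⟩, ?_⟩
      rintro ⟨q, ⟨hq01, -⟩, ⟨i', hi't, hi'n, -, hq4, hq5, -⟩, -, j, hj⟩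
      by_cases hi'' : i' < n
      · have h5 := hq5 hi''
        rw [← hE0'] at h5
        simp only [zero_div, min_eq_right (zero_le_one' ℝ)] at h5
        linarith [(hq01 ⟨i', hi''⟩).1]
      · have hji : (j : ℕ) < i' := by omega
        have := hq4 j hji
        rw [← hE0'] at this
        simp only [zero_div, min_eq_right (zero_le_one' ℝ)] at this
        simp only [Pi.zero_apply] at hj
        linarith
    · -- E > 0
      set m : Fin n → ℝ := fun k => min 1 (E / v k) with hm
      have hmpos : ∀ k, 0 < m k := fun k => lt_min one_pos (div_pos hEpos (hpos k))
      have hmle1 : ∀ k, m k ≤ 1 := fun k => min_le_left _ _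
      set f : ℕ → ℝ := fun i => ∑ k ∈ univ.filter (fun k : Fin n => (k : ℕ) < i), m k with hf
      have hmk : ∀ k : Fin n, (k : ℕ) ≤ t → m k = E / v k := by
        intro k hk
        have hvk : v ⟨t, ht⟩ ≤ v k := hmono k ⟨t, ht⟩ hk
        exact min_eq_right ((div_le_one (hpos k)).mpr (hEv.trans hvk))
      have hft1 : f (t + 1) ≤ ℓ := by
        have hfil : univ.filter (fun k : Fin n => (k : ℕ) < t + 1)
            = univ.filter (fun k : Fin n => (k : ℕ) ≤ t) := by
          apply filter_congr; intro k _; simp [Nat.lt_succ_iff]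
        have : f (t + 1) = E * (∑ k ∈ univ.filter (fun k : Fin n => (k : ℕ) ≤ t), 1 / v k) := by
          rw [hf]
          simp only
          rw [hfil, Finset.mul_sum]
          refine Finset.sum_congr rfl fun k hk => ?_
          rw [hmk k (by simpa using hk), mul_one_div]
        rw [this]; exact hES
      set P : ℕ → Prop := fun i => t + 1 ≤ i ∧ f i ≤ ℓ with hP
      set I := Nat.findGreatest P n with hI
      have hPt1 : P (t + 1) := ⟨le_refl _, hft1⟩
      have ht1n : t + 1 ≤ n := ht
      have hIt : t + 1 ≤ I := Nat.le_findGreatest ht1n hPt1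
      have hIn : I ≤ n := Nat.findGreatest_le n
      have hPI : P I := Nat.findGreatest_spec ht1n hPt1
      have hfI : f I ≤ ℓ := hPI.2
      have hstep : ∀ i (h : i < n), f (i + 1) = f i + m ⟨i, h⟩ := by
        intro i h
        have hins : univ.filter (fun k : Fin n => (k : ℕ) < i + 1)
            = insert ⟨i, h⟩ (univ.filter (fun k : Fin n => (k : ℕ) < i)) := by
          ext k
          simp only [mem_filter, mem_univ, true_and, mem_insert, Fin.ext_iff]
          omega
        rw [hf]
        simp only
        rw [hins, Finset.sum_insert (by simp)]
        ring
      have hgt : ∀ _ : I < n, (ℓ : ℝ) < f (I + 1) := by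
        intro h
        have hnP : ¬ P (I + 1) := Nat.findGreatest_is_greatest (Nat.lt_succ_self I) h
        rw [hP] at hnP
        by_contra hc
        exact hnP ⟨by omega, not_lt.mp hc⟩
      set p : Fin n → ℝ := fun k =>
        if (k : ℕ) < I then m k else if (k : ℕ) = I then (ℓ : ℝ) - f I else 0 with hp
      have hplt : ∀ k : Fin n, (k : ℕ) < I → p k = m k := by
        intro k h; rw [hp]; simp only [if_pos h]
      have hpeq : ∀ k : Fin n, (k : ℕ) = I → p k = (ℓ : ℝ) - f I := by
        intro k h; rw [hp]; simp only; rw [if_neg (by omega), if_pos h]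
      have hpgt : ∀ k : Fin n, I < (k : ℕ) → p k = 0 := by
        intro k h; rw [hp]; simp only; rw [if_neg (by omega), if_neg (by omega)]
      have hpm : ∀ k : Fin n, (k : ℕ) = I → (ℓ : ℝ) - f I < m k := by
        intro k h
        have hkn : I < n := h ▸ k.isLt
        have h1 := hgt hkn
        rw [hstep I hkn] at h1
        have : (⟨I, hkn⟩ : Fin n) = k := by exact Fin.ext h.symm
        rw [this] at h1
        linarith
      have hsum1 : ∀ _ : I < n, ∑ k, p k = (ℓ : ℝ) := by
        intro h
        rw [← Finset.sum_filter_add_sum_filter_not univ (fun k : Fin n => (k : ℕ) < I) p]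
        have h1 : ∑ k ∈ univ.filter (fun k : Fin n => (k : ℕ) < I), p k = f I := by
          rw [hf]; simp only
          exact Finset.sum_congr rfl fun k hk => hplt k (by simpa using hk)
        have h2 : ∑ k ∈ univ.filter (fun k : Fin n => ¬ (k : ℕ) < I), p k = (ℓ : ℝ) - f I := by
          refine Finset.sum_eq_single_of_mem ⟨I, h⟩ (by simp) ?_ |>.trans (hpeq ⟨I, h⟩ rfl)
          intro b hb hne
          refine hpgt b ?_
          have hb' : ¬ (b : ℕ) < I := by simpa using hb
          have : (b : ℕ) ≠ I := fun hc => hne (Fin.ext hc)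
          omega
        rw [h1, h2]; ring
      have hsum2 : ∑ k, p k ≤ ℓ := by
        by_cases h : I < n
        · rw [hsum1 h]
        · have hIeq : I = n := by omega
          have : ∑ k, p k = f I := by
            rw [hf]; simp only
            have hfil : univ.filter (fun k : Fin n => (k : ℕ) < I) = univ := by
              apply Finset.filter_true_of_mem; intro k _; omega
            rw [hfil]
            exact Finset.sum_congr rfl fun k _ => hplt k (by omega)
          rw [this]; exact hfI
      have hp0 : ∀ k, 0 ≤ p k := by
        intro k
        rcases lt_trichotomy ((k : ℕ)) I with h | h | h
        · rw [hplt k h]; exact (hmpos k).le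
        · rw [hpeq k h]; linarith
        · rw [hpgt k h]
      have hp1 : ∀ k, p k ≤ 1 := by
        intro k
        rcases lt_trichotomy ((k : ℕ)) I with h | h | h
        · rw [hplt k h]; exact hmle1 k
        · rw [hpeq k h]; linarith [hpm k h, hmle1 k]
        · rw [hpgt k h]; exact zero_le_one
      refine ⟨p, ⟨fun k => ⟨hp0 k, hp1 k⟩, hsum2⟩,
        ⟨I, hIt, hIn, ?_, ?_, ?_, ?_⟩, ?_⟩
      · intro k hk
        have hkI : (k : ℕ) < I := by omega
        rw [hplt k hkI, hmk k hk, mul_div_cancel₀ E (hpos k).ne']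
      · intro k hk; rw [hplt k hk, hm]
      · intro h
        have h1 := hpm ⟨I, h⟩ rfl
        rw [hpeq ⟨I, h⟩ rfl]
        rw [hm] at h1
        exact h1
      · intro k hk; exact hpgt k (by omega)
      · rintro ⟨q, ⟨hq01, hqsum⟩, ⟨i', hi't, hi'n, -, hq4, hq5, -⟩, hge, j, hj⟩
        by_cases h : I < n
        · have hlt : ∑ k, p k < ∑ k, q k :=
            Finset.sum_lt_sum (fun i _ => hge i) ⟨j, mem_univ j, hj⟩
          rw [hsum1 h] at hlt
          linarith
        · -- I = n : p = m everywhere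
          have hpm' : ∀ k : Fin n, p k = m k := fun k => hplt k (by omega)
          by_cases hi'' : i' < n
          · have h5 := hq5 hi''
            have : m ⟨i', hi''⟩ = min 1 (E / v ⟨i', hi''⟩) := by rw [hm]
            rw [← this] at h5
            have := hge ⟨i', hi''⟩
            rw [hpm' ⟨i', hi''⟩] at this
            linarith
          · have hji : (j : ℕ) < i' := by omega
            have h4 := hq4 j hji
            have : q j = m j := by rw [h4, hm]
            rw [hpm' j, ← this] at hj
            exact lt_irrefl _ hj
end
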